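/- For every f ∈ A_r, the map z ↦ τ(z)(f) is continuous on the closed disk D̄_r; in particular, for every nonzero f ∈ A_r one has |f(z)|^{log r / log |z|} → r^{ord_0(f)} as z → 0 with z ≠ 0. -/

import Mathlib

/-- The hybrid norm on `ℂ`: `|c|_hyb = max {1, |c|}` for `c ≠ 0`, and `|0|_hyb = 0`. -/
noncomputable def hybNorm (c : ℂ) : ℝ := if c = 0 then 0 else max 1 (‖c‖)

/-- The ring `A_r` of formal Laurent series `f = ∑ aₙ tⁿ` with
`∑ |aₙ|_hyb rⁿ < ∞`, viewed as a subset of `ℂ((t))`. -/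
def Ar (r : ℝ) : Set (LaurentSeries ℂ) :=
  {f | Summable fun n : ℤ => hybNorm (f.coeff n) * r ^ n}

/-- The hybrid norm `‖f‖_{hyb,r} = ∑ |aₙ|_hyb rⁿ` of a Laurent series. -/
noncomputable def hybnorm (r : ℝ) (f : LaurentSeries ℂ) : ℝ :=
  ∑' n : ℤ, hybNorm (f.coeff n) * r ^ n

open scoped Classical

/-- The sum of the Laurent series of `f` at a point `z ∈ ℂ`. -/
noncomputable def lEval (f : LaurentSeries ℂ) (z : ℂ) : ℂ :=
  ∑' n : ℤ, f.coeff n * z ^ n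

/-- The seminorm `τ(z)` on `A_r`: for `z = 0` it is `f ↦ r^{ord₀ f}` (with `0 ↦ 0`),
and for `0 < |z| ≤ r` it is `f ↦ |f(z)|^{log r / log |z|}`. -/
noncomputable def tau (r : ℝ) (z : ℂ) (f : LaurentSeries ℂ) : ℝ :=
  if z = 0 then (if f = 0 then 0 else r ^ f.order)
  else ‖lEval f z‖ ^ (Real.log r / Real.log (‖z‖))

/-- `N` is a multiplicative seminorm on the subset `S` of `ℂ((t))` (relativized to `S`):
`N 0 = 0`, `N 1 = 1`, `N` is nonnegative, multiplicative and subadditive on `S`. -/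
def IsMultSeminormOn (S : Set (LaurentSeries ℂ)) (N : LaurentSeries ℂ → ℝ) : Prop :=
  N 0 = 0 ∧ N 1 = 1 ∧ (∀ f ∈ S, 0 ≤ N f) ∧
    (∀ f ∈ S, ∀ g ∈ S, N (f * g) = N f * N g) ∧
    (∀ f ∈ S, ∀ g ∈ S, N (f + g) ≤ N f + N g)

/-!
Write `f = tᵐ F` with `m = ord₀ f` and `F` a power series with `F(0) ≠ 0`. The hybrid summability
makes `F` converge absolutely and continuously on `|z| ≤ r`, and for `0 < |z| ≤ r`
`τ(z)(f) = (|z|ᵐ |F(z)|)^{log r / log |z|} = rᵐ · |F(z)|^{log r / log |z|}`.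
The exponent `log r / log |z|` is positive and tends to `0` as `z → 0`, so this is continuous on the
punctured disk and tends to `rᵐ |F(0)|⁰ = rᵐ = τ(0)(f)` at the centre.
-/

open Filter Topology Metric

noncomputable def psEval (p : PowerSeries ℂ) (z : ℂ) : ℂ :=
  ∑' n : ℕ, PowerSeries.coeff n p * z ^ n

lemma psEval_zero (p : PowerSeries ℂ) : psEval p 0 = PowerSeries.coeff 0 p := by
  rw [psEval, tsum_eq_single 0 fun n hn => by simp [zero_pow hn]]
  simp

lemma continuousOn_psEval {p : PowerSeries ℂ} {R : ℝ}
    (hp : Summable fun n : ℕ => ‖PowerSeries.coeff n p‖ * R ^ n) :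
    ContinuousOn (psEval p) (closedBall 0 R) := by
  refine continuousOn_tsum (fun n => by fun_prop) hp fun n z hz => ?_
  rw [norm_mul, norm_pow]
  gcongr
  exact mem_closedBall_zero_iff.mp hz

lemma lEval_eq_zpow_order_mul_psEval (f : LaurentSeries ℂ) {z : ℂ} (hz : z ≠ 0) :
    lEval f z = z ^ f.order * psEval f.powerSeriesPart z := by
  have hinj : Function.Injective fun n : ℕ => f.order + n := fun a b h => by simpa using h
  have hsupp : (Function.support fun n : ℤ => f.coeff n * z ^ n) ⊆
      Set.range fun n : ℕ => f.order + n := by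
    intro n hn
    have hle : f.order ≤ n := HahnSeries.order_le_of_coeff_ne_zero (left_ne_zero_of_mul hn)
    exact ⟨(n - f.order).toNat, show f.order + ((n - f.order).toNat : ℤ) = n by omega⟩
  rw [lEval, ← hinj.tsum_eq hsupp, psEval, ← tsum_mul_left]
  congr 1 with n
  rw [LaurentSeries.powerSeriesPart_coeff, zpow_add₀ hz, zpow_natCast]
  ring

lemma norm_le_hybNorm (c : ℂ) : ‖c‖ ≤ hybNorm c := by
  unfold hybNorm
  split_ifs with hc
  · simp [hc]
  · exact le_max_right _ _

lemma summable_norm_coeff_powerSeriesPart {r : ℝ} (hr : 0 < r) {f : LaurentSeries ℂ}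
    (hf : f ∈ Ar r) :
    Summable fun n : ℕ => ‖PowerSeries.coeff n f.powerSeriesPart‖ * r ^ n := by
  have hnorm : Summable fun n : ℤ => ‖f.coeff n‖ * r ^ n :=
    .of_nonneg_of_le (fun n => by positivity)
      (fun n => mul_le_mul_of_nonneg_right (norm_le_hybNorm _) (by positivity)) hf
  have hinj : Function.Injective fun n : ℕ => f.order + n := fun a b h => by simpa using h
  refine ((hnorm.comp_injective hinj).mul_left (r ^ (-f.order))).congr fun n => ?_
  simp only [Function.comp_apply, LaurentSeries.powerSeriesPart_coeff, zpow_add₀ hr.ne',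
    zpow_natCast, zpow_neg]
  field_simp

lemma zpow_rpow_log_div_log {r x : ℝ} (hr : 0 < r) (hx : 0 < x) (hlogx : Real.log x ≠ 0)
    (m : ℤ) : (x ^ m) ^ (Real.log r / Real.log x) = r ^ m := by
  rw [← Real.rpow_intCast x m, ← Real.rpow_mul hx.le, Real.rpow_def_of_pos hx,
    ← Real.rpow_intCast r m, Real.rpow_def_of_pos hr]
  congr 1
  field_simp

lemma tendsto_div_log_norm_nhdsNE_zero {E : Type*} [NormedAddGroup E] (c : ℝ) :
    Tendsto (fun z : E => c / Real.log ‖z‖) (𝓝[≠] 0) (𝓝 0) :=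
  tendsto_const_nhds.div_atBot (Real.tendsto_log_nhdsNE_zero.comp
    (tendsto_norm_nhdsNE_zero.mono_right (nhdsWithin_mono _ fun _ hx => ne_of_gt hx)))

-- At `z = 0` the value is `c / log 0 = c / 0 = 0`, which is exactly the limit.
lemma continuousAt_div_log_norm {E : Type*} [NormedAddGroup E] (c : ℝ) {z : E}
    (hz : ‖z‖ ≠ 1) : ContinuousAt (fun z : E => c / Real.log ‖z‖) z := by
  by_cases hz0 : z = 0
  · subst hz0
    rw [← continuousWithinAt_compl_self, ContinuousWithinAt]
    simpa using tendsto_div_log_norm_nhdsNE_zero c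
  · have hpos : 0 < ‖z‖ := norm_pos_iff.mpr hz0
    exact continuousAt_const.div
      ((Real.continuousAt_log hpos.ne').comp continuous_norm.continuousAt)
      (Real.log_ne_zero_of_pos_of_ne_one hpos hz)

lemma log_div_log_norm_pos {r : ℝ} (hr0 : 0 < r) (hr1 : r < 1) {z : ℂ} (hz0 : z ≠ 0)
    (hz : ‖z‖ ≤ r) : 0 < Real.log r / Real.log ‖z‖ :=
  div_pos_of_neg_of_neg (Real.log_neg hr0 hr1)
    (Real.log_neg (norm_pos_iff.mpr hz0) (hz.trans_lt hr1))

lemma tau_zero_right {r : ℝ} (hr0 : 0 < r) (hr1 : r < 1) {z : ℂ} (hz : ‖z‖ ≤ r) :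
    tau r z 0 = 0 := by
  by_cases hz0 : z = 0
  · simp [tau, hz0]
  · simp [tau, hz0, lEval, Real.zero_rpow (log_div_log_norm_pos hr0 hr1 hz0 hz).ne']

lemma tau_eq_zpow_order_mul {r : ℝ} (hr0 : 0 < r) (hr1 : r < 1) {f : LaurentSeries ℂ}
    (hf0 : f ≠ 0) {z : ℂ} (hz : ‖z‖ ≤ r) :
    tau r z f = r ^ f.order * ‖psEval f.powerSeriesPart z‖ ^ (Real.log r / Real.log ‖z‖) := by
  by_cases hz0 : z = 0
  · simp [tau, hz0, hf0]
  · have hpos : 0 < ‖z‖ := norm_pos_iff.mpr hz0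
    rw [tau, if_neg hz0, lEval_eq_zpow_order_mul_psEval f hz0, norm_mul, norm_zpow,
      Real.mul_rpow (by positivity) (norm_nonneg _),
      zpow_rpow_log_div_log hr0 hpos (Real.log_neg hpos (hz.trans_lt hr1)).ne]

lemma continuousOn_tau {r : ℝ} (hr0 : 0 < r) (hr1 : r < 1) {f : LaurentSeries ℂ}
    (hf : f ∈ Ar r) : ContinuousOn (fun z => tau r z f) (closedBall 0 r) := by
  by_cases hf0 : f = 0
  · subst hf0
    exact continuousOn_const.congr fun z hz =>
      tau_zero_right hr0 hr1 (mem_closedBall_zero_iff.mp hz)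
  refine ContinuousOn.congr (fun z hz => ?_) fun z hz =>
    tau_eq_zpow_order_mul hr0 hr1 hf0 (mem_closedBall_zero_iff.mp hz)
  have hz : ‖z‖ ≤ r := mem_closedBall_zero_iff.mp hz
  have hF : ContinuousWithinAt (psEval f.powerSeriesPart) (closedBall 0 r) z :=
    continuousOn_psEval (summable_norm_coeff_powerSeriesPart hr0 hf) z (by simpa using hz)
  have hexp := continuousAt_div_log_norm (Real.log r) (hz.trans_lt hr1).ne
  refine continuousWithinAt_const.mul (hF.norm.rpow hexp.continuousWithinAt ?_)
  by_cases hz0 : z = 0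
  · left
    simpa [hz0, psEval_zero] using HahnSeries.coeff_order_eq_zero.not.mpr hf0
  · exact .inr (log_div_log_norm_pos hr0 hr1 hz0 hz)

/-- For `f ∈ A_r`, `z ↦ τ(z)(f)` is continuous on the closed disk `|z| ≤ r`;
in particular for `f ≠ 0` one has `|f(z)|^{log r / log |z|} → r^{ord₀ f}` as `z → 0`, `z ≠ 0`. -/
theorem tau_continuous (r : ℝ) (hr0 : 0 < r) (hr1 : r < 1)
    (f : LaurentSeries ℂ) (hf : f ∈ Ar r) :
    ContinuousOn (fun z => tau r z f) {z : ℂ | ‖z‖ ≤ r} ∧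
    (f ≠ 0 →
      Filter.Tendsto
        (fun z : ℂ => ‖lEval f z‖ ^ (Real.log r / Real.log (‖z‖)))
        (nhdsWithin 0 {0}ᶜ) (nhds (r ^ f.order))) := by
  have hdisk : {z : ℂ | ‖z‖ ≤ r} = closedBall 0 r := by ext; simp
  have hcont := continuousOn_tau hr0 hr1 hf
  refine ⟨hdisk ▸ hcont, fun hf0 => ?_⟩
  have hat0 : ContinuousAt (fun z => tau r z f) 0 :=
    hcont.continuousAt (closedBall_mem_nhds 0 hr0)
  have hlim := hat0.tendsto.mono_left (nhdsWithin_le_nhds (s := {0}ᶜ))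
  simp only [tau, if_true, if_neg hf0] at hlim
  exact hlim.congr' (eventually_nhdsWithin_of_forall fun z hz => if_neg hz)
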